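/- If the instance admits a feasible schedule, then Δ ≥ n, where n = |P|. -/
import Mathlib


/-- A vehicle-routing instance: a finite set `P` of items, a root `r ∉ P`,
a placement `μ₀` of root and items in a metric space `M`, a delivery time
`δ ≥ 1`, and a deadline `Δ > 0`. -/
structure VRInstance (α M : Type*) [MetricSpace M] where
  P : Finset α
  r : α
  r_not_item : r ∉ P
  P_nonempty : P.Nonempty
  μ₀ : α → M
  δ : ℝ
  one_le_δ : 1 ≤ δ
  Δ : ℝ
  Δ_pos : 0 < Δ

variable {α M : Type*} [MetricSpace M]

/-- A schedule: a finite arborescence `(W, A)` rooted at `I.r` with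
`{r} ∪ P ⊆ W`, out-degree at most 2 everywhere, out-degree at most 1 on items,
together with a placement `μ : W → M` extending `μ₀` on `{r} ∪ P`. -/
structure Schedule {α M : Type*} [MetricSpace M] (I : VRInstance α M) where
  W : Set α
  A : Set (α × α)
  μ : α → M
  finite_W : W.Finite
  root_mem : I.r ∈ W
  items_subset : ↑I.P ⊆ W
  arcs_subset : ∀ a ∈ A, a.1 ∈ W ∧ a.2 ∈ W
  no_arc_into_root : ∀ u, (u, I.r) ∉ A
  unique_in_arc : ∀ v ∈ W, v ≠ I.r → ∃! u, (u, v) ∈ A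
  reachable : ∀ v ∈ W, Relation.ReflTransGen (fun u w => (u, w) ∈ A) I.r v
  outdeg_le_two : ∀ v ∈ W, {x | (v, x) ∈ A}.ncard ≤ 2
  items_outdeg_le_one : ∀ p ∈ I.P, {x | (p, x) ∈ A}.ncard ≤ 1
  μ_placement : ∀ v ∈ insert I.r (↑I.P : Set α), μ v = I.μ₀ v

namespace Schedule

variable {I : VRInstance α M} (S : Schedule I)

/-- Reachability along arcs of the schedule. -/
def reach (u v : α) : Prop := Relation.ReflTransGen (fun a b => (a, b) ∈ S.A) u v

/-- `W_{x*}`: the vertex set of the maximal subarborescence rooted at `x`. -/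
def desc (x : α) : Set α := {y ∈ S.W | S.reach x y}

/-- `W_{ry}`: the vertex set of the directed `r`–`y` path. -/
def pathSet (y : α) : Set α := {u ∈ S.W | S.reach I.r u ∧ S.reach u y}

/-- The arcs on the directed `r`–`y` path. -/
def pathArcs (y : α) : Set (α × α) :=
  {a ∈ S.A | a.1 ∈ S.pathSet y ∧ a.2 ∈ S.pathSet y}

/-- Out-degree of a vertex. -/
noncomputable def outDeg (v : α) : ℕ := {x | (v, x) ∈ S.A}.ncard

/-- The handover delay at a bifurcation node `w`:
`min_{x child of w} |P ∩ W_{x*}|`. -/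
noncomputable def handover (w : α) : ℕ :=
  sInf {k : ℕ | ∃ x, (w, x) ∈ S.A ∧ k = ((↑I.P : Set α) ∩ S.desc x).ncard}

/-- The delay of vertex `y`: travel time along the `r`–`y` path, plus delivery
time `δ` for each item on the path, plus handover delays at bifurcation nodes
on the path. -/
noncomputable def delayTo (y : α) : ℝ :=
  (∑ᶠ a ∈ S.pathArcs y, dist (S.μ a.1) (S.μ a.2))
    + I.δ * ((↑I.P : Set α) ∩ S.pathSet y).ncard
    + ∑ᶠ w ∈ {u ∈ S.pathSet y | S.outDeg u = 2}, (S.handover w : ℝ)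

/-- The delay of the schedule: the maximum delay of an item. -/
noncomputable def delay : ℝ := I.P.sup' I.P_nonempty fun p => S.delayTo p

/-- A schedule is feasible if its delay is at most the deadline. -/
def Feasible : Prop := S.delay ≤ I.Δ

/-- The length (travel cost) of the schedule. -/
noncomputable def length : ℝ := ∑ᶠ a ∈ S.A, dist (S.μ a.1) (S.μ a.2)

/-- The leaves of the schedule (one vehicle per leaf). -/
def leaves : Set α := {v ∈ S.W | S.outDeg v = 0}

/-- The cost of the schedule for setup cost `σ`: length plus `σ` per vehicle. -/
noncomputable def cost (σ : ℝ) : ℝ := S.length + σ * S.leaves.ncard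

end Schedule

/-- The minimum length of a tree with vertex set `{r} ∪ P`,
with edges weighted by the metric distance. -/
noncomputable def mstLength [DecidableEq α] (I : VRInstance α M) : ℝ :=
  sInf {x : ℝ | ∃ T : SimpleGraph ↥(insert I.r I.P), T.IsTree ∧
    x = ∑ᶠ e ∈ T.edgeSet,
      (Sym2.lift ⟨fun u v => dist (I.μ₀ u) (I.μ₀ v), fun u v => dist_comm _ _⟩ : Sym2 ↥(insert I.r I.P) → ℝ) e}

section Aux

namespace Schedule

variable {α M : Type*} [MetricSpace M] {I : VRInstance α M} (S : Schedule I)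

/-- Chains of length `k` along arcs. -/
def chainN (S : Schedule I) : ℕ → α → α → Prop
  | 0, u, v => u = v
  | (k+1), u, v => ∃ w, chainN S k u w ∧ (w, v) ∈ S.A

lemma reach_iff_chainN {u v : α} : S.reach u v ↔ ∃ k, S.chainN k u v := by
  constructor
  · intro h
    induction h with
    | refl => exact ⟨0, rfl⟩
    | tail _ hbc ih => obtain ⟨k, hk⟩ := ih; exact ⟨k + 1, _, hk, hbc⟩
  · rintro ⟨k, hk⟩
    induction k generalizing v with
    | zero => cases hk; exact .refl
    | succ k ih => obtain ⟨w, hw, ha⟩ := hk; exact .tail (ih hw) ha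

lemma chainN_comp : ∀ (m : ℕ) {k : ℕ} {u v w : α},
    S.chainN k u v → S.chainN m v w → S.chainN (k + m) u w := by
  intro m
  induction m with
  | zero => intro k u v w h1 h2; cases h2; exact h1
  | succ m ih =>
      intro k u v w h1 h2
      obtain ⟨y, hy, ha⟩ := h2
      exact ⟨y, ih h1 hy, ha⟩

lemma chainN_unique : ∀ (k : ℕ) {l : ℕ} {v : α},
    S.chainN k I.r v → S.chainN l I.r v → k = l := by
  intro k
  induction k with
  | zero =>
      intro l v h1 h2
      cases h1
      cases l with
      | zero => rfl
      | succ m => obtain ⟨w, _, ha⟩ := h2; exact absurd ha (S.no_arc_into_root w)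
  | succ k ih =>
      intro l v h1 h2
      obtain ⟨w, hw, ha⟩ := h1
      cases l with
      | zero => cases h2; exact absurd ha (S.no_arc_into_root w)
      | succ m =>
          obtain ⟨w', hw', ha'⟩ := h2
          have hvW : v ∈ S.W := (S.arcs_subset _ ha).2
          have hvr : v ≠ I.r := by
            rintro rfl; exact S.no_arc_into_root w ha
          obtain ⟨u, hu, huniq⟩ := S.unique_in_arc v hvW hvr
          have h1 : w = u := huniq w ha
          have h2 : w' = u := huniq w' ha'
          subst h1
          rw [h2] at hw'
          rw [ih hw hw']

lemma not_reach_of_arc {u v : α} (hu : u ∈ S.W) (ha : (u, v) ∈ S.A) :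
    ¬ S.reach v u := by
  intro hr
  obtain ⟨a, hc⟩ := (S.reach_iff_chainN).1 (S.reachable u hu)
  obtain ⟨m, hm⟩ := (S.reach_iff_chainN).1 hr
  have h1 : S.chainN (a + 1) I.r v := ⟨u, hc, ha⟩
  have h2 : S.chainN ((a + 1) + m) I.r u := S.chainN_comp m h1 hm
  have := S.chainN_unique a hc h2
  omega

lemma reach_antisymm {u v : α} (hu : u ∈ S.W) (h1 : S.reach u v) (h2 : S.reach v u) :
    u = v := by
  obtain ⟨a, ha⟩ := (S.reach_iff_chainN).1 (S.reachable u hu)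
  obtain ⟨b, hb⟩ := (S.reach_iff_chainN).1 h1
  obtain ⟨c, hc⟩ := (S.reach_iff_chainN).1 h2
  have hav : S.chainN (a + b) I.r v := S.chainN_comp b ha hb
  have hau : S.chainN ((a + b) + c) I.r u := S.chainN_comp c hav hc
  have := S.chainN_unique a ha hau
  have hb0 : b = 0 := by omega
  subst hb0; exact hb

lemma chainN_total : ∀ (b : ℕ) {d : ℕ} {u w p : α},
    S.chainN b u p → S.chainN d w p → S.reach u w ∨ S.reach w u := by
  intro b
  induction b with
  | zero =>
      intro d u w p h1 h2
      cases h1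
      exact Or.inr ((S.reach_iff_chainN).2 ⟨d, h2⟩)
  | succ b ih =>
      intro d u w p h1 h2
      cases d with
      | zero =>
          cases h2
          exact Or.inl ((S.reach_iff_chainN).2 ⟨b + 1, h1⟩)
      | succ m =>
          obtain ⟨y, hy, hay⟩ := h1
          obtain ⟨y', hy', hay'⟩ := h2
          have hpW : p ∈ S.W := (S.arcs_subset _ hay).2
          have hpr : p ≠ I.r := by rintro rfl; exact S.no_arc_into_root y hay
          obtain ⟨z, _, huniq⟩ := S.unique_in_arc p hpW hpr
          have : y = y' := by rw [huniq y hay, huniq y' hay']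
          subst this
          exact ih hy hy'

lemma reach_total {u w p : α} (h1 : S.reach u p) (h2 : S.reach w p) :
    S.reach u w ∨ S.reach w u := by
  obtain ⟨b, hb⟩ := (S.reach_iff_chainN).1 h1
  obtain ⟨d, hd⟩ := (S.reach_iff_chainN).1 h2
  exact S.chainN_total b hb hd

end Schedule

end Aux
section Aux2

namespace Schedule

variable {α M : Type*} [MetricSpace M] {I : VRInstance α M} (S : Schedule I)

/-- vertices between `v` and `p`. -/
def midSet (v p : α) : Set α := {u ∈ S.W | S.reach v u ∧ S.reach u p}

lemma pathSet_eq_midSet (p : α) : S.pathSet p = S.midSet I.r p := rfl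

lemma desc_subset_W (x : α) : S.desc x ⊆ S.W := fun _ h => h.1

lemma midSet_subset_W (v p : α) : S.midSet v p ⊆ S.W := fun _ h => h.1

lemma desc_finite (x : α) : (S.desc x).Finite := S.finite_W.subset (S.desc_subset_W x)

lemma midSet_finite (v p : α) : (S.midSet v p).Finite :=
  S.finite_W.subset (S.midSet_subset_W v p)

lemma mem_desc_self {v : α} (hv : v ∈ S.W) : v ∈ S.desc v := ⟨hv, .refl⟩

lemma desc_child_subset {v x : α} (ha : (v, x) ∈ S.A) : S.desc x ⊆ S.desc v :=
  fun y hy => ⟨hy.1, .head ha hy.2⟩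

lemma notMem_desc_child {v x : α} (hv : v ∈ S.W) (ha : (v, x) ∈ S.A) :
    v ∉ S.desc x := fun hy => S.not_reach_of_arc hv ha hy.2

lemma desc_child_ssubset {v x : α} (hv : v ∈ S.W) (ha : (v, x) ∈ S.A) :
    S.desc x ⊂ S.desc v :=
  ⟨S.desc_child_subset ha, fun h => S.notMem_desc_child hv ha (h (S.mem_desc_self hv))⟩

lemma desc_eq_insert {v : α} (hv : v ∈ S.W) :
    S.desc v = insert v (⋃ x ∈ {x | (v, x) ∈ S.A}, S.desc x) := by
  ext y
  simp only [Set.mem_insert_iff, Set.mem_iUnion, Set.mem_setOf_eq, exists_prop]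
  constructor
  · rintro ⟨hyW, hr⟩
    rcases Relation.ReflTransGen.cases_head hr with h | ⟨x, hvx, hxy⟩
    · exact Or.inl h.symm
    · exact Or.inr ⟨x, hvx, hyW, hxy⟩
  · rintro (rfl | ⟨x, hvx, hyW, hxy⟩)
    · exact S.mem_desc_self hv
    · exact ⟨hyW, .head hvx hxy⟩

lemma reach_child_eq {v x x' : α} (hv : v ∈ S.W) (h1 : (v, x) ∈ S.A)
    (h2 : (v, x') ∈ S.A) (hr : S.reach x x') : x = x' := by
  by_contra hne
  obtain ⟨b, hb⟩ := (S.reach_iff_chainN).1 hr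
  cases b with
  | zero => exact hne hb
  | succ m =>
      obtain ⟨y, hy, hay⟩ := hb
      have hx'W : x' ∈ S.W := (S.arcs_subset _ h2).2
      have hx'r : x' ≠ I.r := by rintro rfl; exact S.no_arc_into_root v h2
      obtain ⟨z, _, huniq⟩ := S.unique_in_arc x' hx'W hx'r
      have hyv : y = v := by rw [huniq y hay, huniq v h2]
      subst hyv
      exact S.not_reach_of_arc hv h1 ((S.reach_iff_chainN).2 ⟨m, hy⟩)

lemma desc_child_disjoint {v x x' : α} (hv : v ∈ S.W) (h1 : (v, x) ∈ S.A)
    (h2 : (v, x') ∈ S.A) (hne : x ≠ x') : Disjoint (S.desc x) (S.desc x') := by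
  rw [Set.disjoint_left]
  rintro y ⟨_, hxy⟩ ⟨_, hx'y⟩
  rcases S.reach_total hxy hx'y with h | h
  · exact hne (S.reach_child_eq hv h1 h2 h)
  · exact hne (S.reach_child_eq hv h2 h1 h).symm

lemma mem_midSet_self_left {v p : α} (hv : v ∈ S.W) (hr : S.reach v p) :
    v ∈ S.midSet v p := ⟨hv, .refl, hr⟩

lemma midSet_child_subset {v x p : α} (ha : (v, x) ∈ S.A) :
    S.midSet x p ⊆ S.midSet v p :=
  fun u hu => ⟨hu.1, .head ha hu.2.1, hu.2.2⟩

lemma notMem_midSet_child {v x p : α} (hv : v ∈ S.W) (ha : (v, x) ∈ S.A) :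
    v ∉ S.midSet x p := fun hu => S.not_reach_of_arc hv ha hu.2.1

lemma midSet_self {v : α} (hv : v ∈ S.W) : S.midSet v v = {v} := by
  ext u
  simp only [Set.mem_singleton_iff]
  constructor
  · rintro ⟨huW, h1, h2⟩
    exact S.reach_antisymm huW h2 h1
  · rintro rfl; exact ⟨hv, .refl, .refl⟩

end Schedule

end Aux2
section Aux3

namespace Schedule

variable {α M : Type*} [MetricSpace M] {I : VRInstance α M} (S : Schedule I)

lemma finsum_mem_le_of_subset {s t : Set α} (f : α → ℕ) (h : s ⊆ t) (ht : t.Finite) :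
    ∑ᶠ w ∈ s, f w ≤ ∑ᶠ w ∈ t, f w := by
  have hs := ht.subset h
  rw [← hs.coe_toFinset, ← ht.coe_toFinset, finsum_mem_coe_finset, finsum_mem_coe_finset]
  exact Finset.sum_le_sum_of_subset (by simpa using h)

lemma finsum_mem_insert_le {v : α} {s t : Set α} (f : α → ℕ) (hv : v ∉ s)
    (h : insert v s ⊆ t) (ht : t.Finite) :
    f v + ∑ᶠ w ∈ s, f w ≤ ∑ᶠ w ∈ t, f w := by
  have hs : s.Finite := ht.subset (subset_trans (Set.subset_insert v s) h)
  have heq : ∑ᶠ w ∈ insert v s, f w = f v + ∑ᶠ w ∈ s, f w := by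
    rw [show insert v s = {v} ∪ s from rfl,
      finsum_mem_union (Set.disjoint_singleton_left.2 hv) (Set.finite_singleton v) hs,
      finsum_mem_singleton]
  rw [← heq]
  exact finsum_mem_le_of_subset f h ht

lemma key : ∀ (n : ℕ) (v : α), v ∈ S.W → (S.desc v).ncard ≤ n →
    ((↑I.P : Set α) ∩ S.desc v).Nonempty →
    ∃ p ∈ I.P, S.reach v p ∧
      ((↑I.P : Set α) ∩ S.desc v).ncard ≤
        ((↑I.P : Set α) ∩ S.midSet v p).ncard +
          ∑ᶠ w ∈ {u ∈ S.midSet v p | S.outDeg u = 2}, S.handover w := by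
  intro n
  induction n with
  | zero =>
      intro v hv hle _
      exfalso
      have : 0 < (S.desc v).ncard :=
        (Set.ncard_pos (S.desc_finite v)).2 ⟨v, S.mem_desc_self hv⟩
      omega
  | succ n ih =>
      intro v hv hle hne
      by_cases hall : ∀ x, (v, x) ∈ S.A → ((↑I.P : Set α) ∩ S.desc x) = ∅
      · -- all children are item-free; take p = v
        have hsub : (↑I.P : Set α) ∩ S.desc v ⊆ {v} := by
          intro y hy
          have hy2 := hy.2
          rw [S.desc_eq_insert hv] at hy2
          rcases hy2 with h | h
          · exact h
          · simp only [Set.mem_iUnion, Set.mem_setOf_eq, exists_prop] at h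
            obtain ⟨x, hx, hyx⟩ := h
            exact absurd (Set.mem_inter hy.1 hyx) (by rw [hall x hx]; exact id)
        obtain ⟨q, hq⟩ := hne
        have hqv : q = v := hsub hq
        subst hqv
        have hqP : q ∈ I.P := hq.1
        refine ⟨q, hqP, .refl, ?_⟩
        have h1 : ((↑I.P : Set α) ∩ S.desc q).ncard ≤ 1 := by
          have := Set.ncard_le_ncard hsub (Set.finite_singleton q)
          simpa using this
        have h2 : 1 ≤ ((↑I.P : Set α) ∩ S.midSet q q).ncard := by
          have hmem : q ∈ (↑I.P : Set α) ∩ S.midSet q q :=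
            ⟨hqP, S.mem_midSet_self_left hv Relation.ReflTransGen.refl⟩
          have hfin : ((↑I.P : Set α) ∩ S.midSet q q).Finite :=
            (S.midSet_finite q q).subset Set.inter_subset_right
          have := (Set.ncard_pos hfin).2 ⟨q, hmem⟩
          omega
        omega
      · push_neg at hall
        obtain ⟨x0, hx0A, hx0ne⟩ := hall
        have hCW : {x | (v, x) ∈ S.A} ⊆ S.W := fun x hx => (S.arcs_subset _ hx).2
        have hCfin : ({x | (v, x) ∈ S.A} : Set α).Finite := S.finite_W.subset hCW
        have hC2 : ({x | (v, x) ∈ S.A} : Set α).ncard ≤ 2 := S.outdeg_le_two v hv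
        have hC1 : 1 ≤ ({x | (v, x) ∈ S.A} : Set α).ncard :=
          (Set.ncard_pos hCfin).2 ⟨x0, hx0A⟩
        -- generic step, given a chosen child `a` and a bound with slack `extra`
        have step : ∀ a : α, (v, a) ∈ S.A → ((↑I.P : Set α) ∩ S.desc a).Nonempty →
            ∀ extra : ℕ,
            ((↑I.P : Set α) ∩ S.desc v).ncard ≤
              ((↑I.P : Set α) ∩ ({v} : Set α)).ncard +
                ((↑I.P : Set α) ∩ S.desc a).ncard + extra →
            (S.outDeg v = 2 → extra ≤ S.handover v) →
            (S.outDeg v ≠ 2 → extra = 0) →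
            ∃ p ∈ I.P, S.reach v p ∧
              ((↑I.P : Set α) ∩ S.desc v).ncard ≤
                ((↑I.P : Set α) ∩ S.midSet v p).ncard +
                  ∑ᶠ w ∈ {u ∈ S.midSet v p | S.outDeg u = 2}, S.handover w := by
          intro a haA hane extra hbound hex2 hexne
          have haW : a ∈ S.W := (S.arcs_subset _ haA).2
          have halt : (S.desc a).ncard ≤ n := by
            have := Set.ncard_lt_ncard (S.desc_child_ssubset hv haA) (S.desc_finite v)
            omega
          obtain ⟨p, hpP, hpr, hbd⟩ := ih a haW halt hane
          have hvp : S.reach v p := .head haA hpr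
          refine ⟨p, hpP, hvp, ?_⟩
          have hstep2 : ((↑I.P : Set α) ∩ ({v} : Set α)).ncard +
              ((↑I.P : Set α) ∩ S.midSet a p).ncard ≤
              ((↑I.P : Set α) ∩ S.midSet v p).ncard := by
            have hdisj : Disjoint ((↑I.P : Set α) ∩ ({v} : Set α))
                ((↑I.P : Set α) ∩ S.midSet a p) := by
              rw [Set.disjoint_left]
              rintro y ⟨_, rfl⟩ ⟨_, hy2⟩
              exact S.notMem_midSet_child hv haA hy2
            have hfin1 : ((↑I.P : Set α) ∩ ({v} : Set α)).Finite :=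
              (Set.finite_singleton v).subset Set.inter_subset_right
            have hfin2 : ((↑I.P : Set α) ∩ S.midSet a p).Finite :=
              (S.midSet_finite a p).subset Set.inter_subset_right
            rw [← Set.ncard_union_eq hdisj hfin1 hfin2, ← Set.inter_union_distrib_left]
            refine Set.ncard_le_ncard (Set.inter_subset_inter_right _ ?_)
              ((S.midSet_finite v p).subset Set.inter_subset_right)
            rintro y (rfl | hy)
            · exact S.mem_midSet_self_left hv hvp
            · exact S.midSet_child_subset haA hy
          have hBsub : {u ∈ S.midSet a p | S.outDeg u = 2} ⊆
              {u ∈ S.midSet v p | S.outDeg u = 2} :=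
            fun u hu => ⟨S.midSet_child_subset haA hu.1, hu.2⟩
          have hBfin : ({u ∈ S.midSet v p | S.outDeg u = 2} : Set α).Finite :=
            (S.midSet_finite v p).subset (Set.sep_subset _ _)
          have hsum : (∑ᶠ w ∈ {u ∈ S.midSet a p | S.outDeg u = 2}, S.handover w) + extra ≤
              ∑ᶠ w ∈ {u ∈ S.midSet v p | S.outDeg u = 2}, S.handover w := by
            by_cases h2 : S.outDeg v = 2
            · have h3 := hex2 h2
              have hnm : v ∉ {u ∈ S.midSet a p | S.outDeg u = 2} :=
                fun hu => S.notMem_midSet_child hv haA hu.1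
              have hins : insert v {u ∈ S.midSet a p | S.outDeg u = 2} ⊆
                  {u ∈ S.midSet v p | S.outDeg u = 2} := by
                rintro u (rfl | hu)
                · exact ⟨S.mem_midSet_self_left hv hvp, h2⟩
                · exact hBsub hu
              have := finsum_mem_insert_le S.handover hnm hins hBfin
              omega
            · rw [hexne h2]
              have := finsum_mem_le_of_subset S.handover hBsub hBfin
              omega
          omega
        rcases (by omega : ({x | (v, x) ∈ S.A} : Set α).ncard = 1 ∨
            ({x | (v, x) ∈ S.A} : Set α).ncard = 2) with h1 | h2
        · -- out-degree 1
          obtain ⟨a, hCa⟩ := Set.ncard_eq_one.1 h1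
          have haA : (v, a) ∈ S.A := by
            have : a ∈ ({x | (v, x) ∈ S.A} : Set α) := by rw [hCa]; rfl
            exact this
          have hx0a : x0 = a := by
            have : x0 ∈ ({x | (v, x) ∈ S.A} : Set α) := hx0A
            rw [hCa] at this; exact this
          subst hx0a
          have hbound : ((↑I.P : Set α) ∩ S.desc v).ncard ≤
              ((↑I.P : Set α) ∩ ({v} : Set α)).ncard +
                ((↑I.P : Set α) ∩ S.desc x0).ncard + 0 := by
            have hdec : S.desc v = insert v (S.desc x0) := by
              rw [S.desc_eq_insert hv, hCa]; simp
            have hsub : (↑I.P : Set α) ∩ S.desc v ⊆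
                ((↑I.P : Set α) ∩ ({v} : Set α)) ∪ ((↑I.P : Set α) ∩ S.desc x0) := by
              rw [hdec, ← Set.inter_union_distrib_left]
              exact Set.inter_subset_inter_right _ (by rw [Set.singleton_union])
            calc ((↑I.P : Set α) ∩ S.desc v).ncard ≤
                (((↑I.P : Set α) ∩ ({v} : Set α)) ∪ ((↑I.P : Set α) ∩ S.desc x0)).ncard :=
                  Set.ncard_le_ncard hsub
                    (((Set.finite_singleton v).subset Set.inter_subset_right).union
                      ((S.desc_finite x0).subset Set.inter_subset_right))
              _ ≤ ((↑I.P : Set α) ∩ ({v} : Set α)).ncard +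
                    ((↑I.P : Set α) ∩ S.desc x0).ncard := Set.ncard_union_le _ _
              _ ≤ _ := le_refl _
          have hdeg : S.outDeg v ≠ 2 := by
            have : S.outDeg v = 1 := h1
            omega
          exact step x0 haA (hx0ne) 0 hbound
            (fun h => absurd h hdeg) (fun _ => rfl)
        · -- out-degree 2
          obtain ⟨a, b, hab, hCab⟩ := Set.ncard_eq_two.1 h2
          have main : ∀ a b : α, a ≠ b → ({x | (v, x) ∈ S.A} : Set α) = {a, b} →
              ((↑I.P : Set α) ∩ S.desc b).ncard ≤ ((↑I.P : Set α) ∩ S.desc a).ncard →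
              ∃ p ∈ I.P, S.reach v p ∧
                ((↑I.P : Set α) ∩ S.desc v).ncard ≤
                  ((↑I.P : Set α) ∩ S.midSet v p).ncard +
                    ∑ᶠ w ∈ {u ∈ S.midSet v p | S.outDeg u = 2}, S.handover w := by
            intro a b hab hCab hba
            have haA : (v, a) ∈ S.A := by
              have : a ∈ ({x | (v, x) ∈ S.A} : Set α) := by
                rw [hCab]; exact Set.mem_insert a _
              exact this
            have hbA : (v, b) ∈ S.A := by
              have : b ∈ ({x | (v, x) ∈ S.A} : Set α) := by
                rw [hCab]; exact Set.mem_insert_iff.2 (Or.inr rfl)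
              exact this
            have hdeg2 : S.outDeg v = 2 := by
              show ({x | (v, x) ∈ S.A} : Set α).ncard = 2
              rw [hCab]; exact Set.ncard_pair hab
            have hane : ((↑I.P : Set α) ∩ S.desc a).Nonempty := by
              have hx0C : x0 ∈ ({x | (v, x) ∈ S.A} : Set α) := hx0A
              rw [hCab] at hx0C
              rcases hx0C with rfl | rfl
              · exact hx0ne
              · have hb1 : 1 ≤ ((↑I.P : Set α) ∩ S.desc x0).ncard := by
                  have hfin : ((↑I.P : Set α) ∩ S.desc x0).Finite :=
                    (S.desc_finite x0).subset Set.inter_subset_right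
                  have := (Set.ncard_pos hfin).2 hx0ne
                  omega
                exact Set.nonempty_of_ncard_ne_zero (by omega)
            have hbound : ((↑I.P : Set α) ∩ S.desc v).ncard ≤
                ((↑I.P : Set α) ∩ ({v} : Set α)).ncard +
                  ((↑I.P : Set α) ∩ S.desc a).ncard +
                  ((↑I.P : Set α) ∩ S.desc b).ncard := by
              have hdec : S.desc v = insert v (S.desc a ∪ S.desc b) := by
                rw [S.desc_eq_insert hv, hCab]; simp
              have hsub : (↑I.P : Set α) ∩ S.desc v ⊆
                  ((↑I.P : Set α) ∩ ({v} : Set α)) ∪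
                    (((↑I.P : Set α) ∩ S.desc a) ∪ ((↑I.P : Set α) ∩ S.desc b)) := by
                rw [hdec, ← Set.inter_union_distrib_left, ← Set.inter_union_distrib_left]
                exact Set.inter_subset_inter_right _ (by rw [Set.singleton_union])
              have hfa : ((↑I.P : Set α) ∩ S.desc a).Finite :=
                (S.desc_finite a).subset Set.inter_subset_right
              have hfb : ((↑I.P : Set α) ∩ S.desc b).Finite :=
                (S.desc_finite b).subset Set.inter_subset_right
              have hfv : ((↑I.P : Set α) ∩ ({v} : Set α)).Finite :=
                (Set.finite_singleton v).subset Set.inter_subset_right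
              calc ((↑I.P : Set α) ∩ S.desc v).ncard ≤ _ :=
                    Set.ncard_le_ncard hsub (hfv.union (hfa.union hfb))
                _ ≤ ((↑I.P : Set α) ∩ ({v} : Set α)).ncard +
                      (((↑I.P : Set α) ∩ S.desc a) ∪ ((↑I.P : Set α) ∩ S.desc b)).ncard :=
                    Set.ncard_union_le _ _
                _ ≤ _ := by
                    have := Set.ncard_union_le ((↑I.P : Set α) ∩ S.desc a)
                      ((↑I.P : Set α) ∩ S.desc b)
                    omega
            have hhand : ((↑I.P : Set α) ∩ S.desc b).ncard ≤ S.handover v := by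
              refine le_csInf ⟨((↑I.P : Set α) ∩ S.desc a).ncard, a, haA, rfl⟩ ?_
              rintro k ⟨x, hxA, rfl⟩
              have hxC : x ∈ ({x | (v, x) ∈ S.A} : Set α) := hxA
              rw [hCab] at hxC
              rcases hxC with rfl | rfl
              · exact hba
              · exact le_refl _
            exact step a haA hane _ hbound (fun _ => hhand)
              (fun h => absurd hdeg2 h)
          rcases le_total (((↑I.P : Set α) ∩ S.desc b).ncard)
              (((↑I.P : Set α) ∩ S.desc a).ncard) with h | h
          · exact main a b hab hCab h
          · exact main b a hab.symm (by rw [hCab, Set.pair_comm]) h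

end Schedule

end Aux3
/-- **If the instance admits a feasible schedule, then `Δ ≥ n = |P|`.** -/
theorem deadline_ge_card (I : VRInstance α M)
    (hfeas : ∃ S : Schedule I, S.Feasible) :
    (I.P.card : ℝ) ≤ I.Δ := by
  obtain ⟨S, hS⟩ := hfeas
  have hPsub : (↑I.P : Set α) ⊆ S.desc I.r :=
    fun p hp => ⟨S.items_subset hp, S.reachable p (S.items_subset hp)⟩
  have hPdesc : (↑I.P : Set α) ∩ S.desc I.r = ↑I.P := Set.inter_eq_left.2 hPsub
  obtain ⟨q, hq⟩ := I.P_nonempty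
  obtain ⟨p, hpP, hpr, hbd⟩ := S.key (S.desc I.r).ncard I.r S.root_mem (le_refl _)
    (by rw [hPdesc]; exact ⟨q, Finset.mem_coe.2 hq⟩)
  rw [hPdesc, Set.ncard_coe_finset] at hbd
  -- rewrite the handover sum as a cast of a natural sum
  have hBfin : ({u ∈ S.pathSet p | S.outDeg u = 2} : Set α).Finite :=
    (S.midSet_finite I.r p).subset (Set.sep_subset _ _)
  have hcast : (∑ᶠ w ∈ {u ∈ S.pathSet p | S.outDeg u = 2}, (S.handover w : ℝ)) =
      ((∑ᶠ w ∈ {u ∈ S.pathSet p | S.outDeg u = 2}, S.handover w : ℕ) : ℝ) := by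
    rw [← hBfin.coe_toFinset, finsum_mem_coe_finset, finsum_mem_coe_finset, Nat.cast_sum]
  have hT1 : 0 ≤ ∑ᶠ a ∈ S.pathArcs p, dist (S.μ a.1) (S.μ a.2) := by
    rw [finsum_mem_def]
    exact finsum_nonneg fun a => Set.indicator_nonneg (fun _ _ => dist_nonneg) a
  have hδ : (((↑I.P : Set α) ∩ S.pathSet p).ncard : ℝ) ≤
      I.δ * (((↑I.P : Set α) ∩ S.pathSet p).ncard : ℝ) :=
    le_mul_of_one_le_left (Nat.cast_nonneg _) I.one_le_δ
  have hdelay : (I.P.card : ℝ) ≤ S.delayTo p := by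
    unfold Schedule.delayTo
    rw [hcast]
    have hbd' : (I.P.card : ℝ) ≤
        ((((↑I.P : Set α) ∩ S.pathSet p).ncard : ℕ) : ℝ) +
          ((∑ᶠ w ∈ {u ∈ S.pathSet p | S.outDeg u = 2}, S.handover w : ℕ) : ℝ) := by
      rw [S.pathSet_eq_midSet]
      exact_mod_cast hbd
    have := add_le_add (add_le_add hT1 hδ) (le_refl
      ((∑ᶠ w ∈ {u ∈ S.pathSet p | S.outDeg u = 2}, S.handover w : ℕ) : ℝ))
    simp only [zero_add] at this
    linarith
  have hsup : S.delayTo p ≤ S.delay := Finset.le_sup' _ hpP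
  exact le_trans (le_trans hdelay hsup) hS
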